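/- arXiv:2507.00194 — 2 statements merged into one kernel-verified Lean document; each statement's English description precedes it below -/
import Mathlib

section
/- Let P = {0, p₁, 1 − p₁, p₂, 1 − p₂, 1} be an algebra of S-probabilities of type MO₂, let q be an S-probability with q ∉ P, 0 < q < p₁ and 0 < q < p₂ (strict pointwise order), and let Q be a Boolean algebra of S-probabilities with P ∪ {q} ⊆ Q such that p₁ and p₂ are incomparable and the supremum v of p₁ and p₂ in Q satisfies v < 1. Then S has at least 4 elements. -/
/-- An `S`-probability: a function `p : S → ℝ` with `0 ≤ p s ≤ 1` for all `s`. -/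
def IsProb (S : Type*) (p : S → ℝ) : Prop := ∀ s, 0 ≤ p s ∧ p s ≤ 1

/-- An algebra of `S`-probabilities: a set of `S`-probabilities containing the constant `0`,
closed under `p ↦ 1 - p`, and containing `p + q + r` for pairwise orthogonal `p, q, r`
(where `p ⊥ q` means `p ≤ 1 - q`). -/
def IsAlg (S : Type*) (P : Set (S → ℝ)) : Prop :=
  (∀ p ∈ P, IsProb S p) ∧
  (0 : S → ℝ) ∈ P ∧
  (∀ p ∈ P, 1 - p ∈ P) ∧
  ∀ p q r : S → ℝ, p ∈ P → q ∈ P → r ∈ P →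
    p ≤ 1 - q → q ≤ 1 - r → r ≤ 1 - p → p + q + r ∈ P

/-- A function `p : S → ℝ` is varying if it is neither everywhere `≤ 1/2`
nor everywhere `≥ 1/2`. -/
def Varying (S : Type*) (p : S → ℝ) : Prop :=
  ¬(∀ s, p s ≤ 1 / 2) ∧ ¬(∀ s, 1 / 2 ≤ p s)

/-- `m` is the infimum of `p` and `q` within the poset `(P, ≤)`. -/
def IsInfIn (S : Type*) (P : Set (S → ℝ)) (p q m : S → ℝ) : Prop :=
  m ∈ P ∧ m ≤ p ∧ m ≤ q ∧ ∀ u ∈ P, u ≤ p → u ≤ q → u ≤ m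

/-- `j` is the supremum of `p` and `q` within the poset `(P, ≤)`. -/
def IsSupIn (S : Type*) (P : Set (S → ℝ)) (p q j : S → ℝ) : Prop :=
  j ∈ P ∧ p ≤ j ∧ q ≤ j ∧ ∀ u ∈ P, p ≤ u → q ≤ u → j ≤ u

/-- A Boolean algebra of `S`-probabilities: an algebra of `S`-probabilities in which any two
elements have an infimum and a supremum within `(P, ≤)`, the resulting lattice is distributive,
and for every `p ∈ P` the infimum of `p` and `1 - p` is `0` and their supremum is `1`. -/
def IsBooleanAlg (S : Type*) (P : Set (S → ℝ)) : Prop :=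
  IsAlg S P ∧
  (∀ p ∈ P, ∀ q ∈ P, (∃ m, IsInfIn S P p q m) ∧ (∃ j, IsSupIn S P p q j)) ∧
  (∀ p ∈ P, ∀ q ∈ P, ∀ r ∈ P, ∀ qr a pq pr b : S → ℝ,
    IsSupIn S P q r qr → IsInfIn S P p qr a →
    IsInfIn S P p q pq → IsInfIn S P p r pr → IsSupIn S P pq pr b → a = b) ∧
  ∀ p ∈ P, IsInfIn S P p (1 - p) 0 ∧ IsSupIn S P p (1 - p) 1

/-- The extension `(p, c)` of `p : S → ℝ` to `S̄ = S ∪ {s̄}` (modelled as `Option S`,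
with `none` playing the role of the new state `s̄`), taking the value `c` at `s̄`. -/
def extFun {S : Type*} (p : S → ℝ) (c : ℝ) : Option S → ℝ :=
  fun x => Option.elim x c p

/-- The `0,1`-extension `P̄ = {(p,0) : p ∈ P} ∪ {(p,1) : p ∈ P}` of a set `P` of
`S`-probabilities. -/
def extSet {S : Type*} (P : Set (S → ℝ)) : Set (Option S → ℝ) :=
  {f | ∃ p ∈ P, f = extFun p 0 ∨ f = extFun p 1}

/-- `p` and `q` are partially reciprocal below `1/2`. -/
def PRBelow (S : Type*) (p q : S → ℝ) : Prop := ∀ s, min (p s) (q s) ≤ 1 / 2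

/-- `p` and `q` are partially reciprocal above `1/2`. -/
def PRAbove (S : Type*) (p q : S → ℝ) : Prop := ∀ s, 1 / 2 ≤ max (p s) (q s)

/-- `p` and `q` are reciprocal. -/
def Reciprocal (S : Type*) (p q : S → ℝ) : Prop := PRBelow S p q ∧ PRAbove S p q

/-- Two functions are incomparable in the pointwise order. -/
def Incomp {S : Type*} (a b : S → ℝ) : Prop := ¬a ≤ b ∧ ¬b ≤ a

/-- An algebra of `S`-probabilities of type `MO₂`,
with the six pairwise distinct elements `0, p₁, 1 - p₁, p₂, 1 - p₂, 1` such that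
`p₁, 1 - p₁, p₂, 1 - p₂` are pairwise incomparable. -/
def IsMO2 (S : Type*) (P : Set (S → ℝ)) (p1 p2 : S → ℝ) : Prop :=
  IsAlg S P ∧
  P = {0, p1, 1 - p1, p2, 1 - p2, 1} ∧
  ([(0 : S → ℝ), p1, 1 - p1, p2, 1 - p2, 1].Pairwise (· ≠ ·)) ∧
  Incomp p1 (1 - p1) ∧ Incomp p1 p2 ∧ Incomp p1 (1 - p2) ∧
  Incomp (1 - p1) p2 ∧ Incomp (1 - p1) (1 - p2) ∧ Incomp p2 (1 - p2)

/-- `f` is an atom of `P`: a minimal element of `P \ {0}`. -/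
def IsAtomOf (S : Type*) (P : Set (S → ℝ)) (f : S → ℝ) : Prop :=
  f ∈ P ∧ f ≠ 0 ∧ ∀ g ∈ P, g ≠ 0 → g ≤ f → g = f

/-
The four meets `p₁ ∧ p₂`, `p₁ ∧ p₂'`, `p₁' ∧ p₂`, `p₁' ∧ p₂'` in `Q` (with `p' = 1 - p`) sum
pointwise to `1`: distributivity gives `x = (x ∧ y) ∨ (x ∧ y')`, and this join is the orthogonal
sum `(x ∧ y) + (x ∧ y')`. None of them vanishes: `q ≤ p₁ ∧ p₂`, `1 - v ≤ p₁' ∧ p₂'`, and the two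
mixed meets are nonzero because `p₁` and `p₂` are incomparable. A nonzero element `x` of a
Boolean algebra of `S`-probabilities exceeds `1/2` at some state, for otherwise `x ≤ 1 - x`
and hence `x ≤ x ∧ (1 - x) = 0`. Since the four meets sum to `1`, no state carries two of them
above `1/2`, so these states are pairwise distinct.
-/

open Function

theorem injective_of_sum_eq_one_of_half_lt {ι S : Type*} [Fintype ι] {f : ι → S → ℝ}
    (hf : ∀ i, 0 ≤ f i) (hsum : ∑ i, f i = 1) {t : ι → S} (ht : ∀ i, 1 / 2 < f i (t i)) :
    Injective t := by
  intro i j hij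
  by_contra hne
  have hle : f i + f j ≤ 1 :=
    hsum ▸ Finset.add_le_sum (fun k _ => hf k) (Finset.mem_univ i) (Finset.mem_univ j) hne
  have hi := ht i
  have hj := ht j
  have hle' := hle (t i)
  rw [← hij] at hj
  simp only [Pi.add_apply, Pi.one_apply] at hle'
  linarith

section

variable {S : Type*} {Q : Set (S → ℝ)} {x y m n u : S → ℝ}

theorem IsProb.nonneg (hx : IsProb S x) : 0 ≤ x := fun s => (hx s).1

theorem IsProb.le_one (hx : IsProb S x) : x ≤ 1 := fun s => (hx s).2

namespace IsAlg

variable (hQ : IsAlg S Q)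
include hQ

theorem isProb (hx : x ∈ Q) : IsProb S x := hQ.1 x hx

theorem zero_mem : (0 : S → ℝ) ∈ Q := hQ.2.1

theorem one_sub_mem (hx : x ∈ Q) : 1 - x ∈ Q := hQ.2.2.1 x hx

theorem add_add_mem {r : S → ℝ} (hx : x ∈ Q) (hy : y ∈ Q) (hr : r ∈ Q) (hxy : x ≤ 1 - y)
    (hyr : y ≤ 1 - r) (hrx : r ≤ 1 - x) : x + y + r ∈ Q :=
  hQ.2.2.2 x y r hx hy hr hxy hyr hrx

theorem add_mem (hx : x ∈ Q) (hy : y ∈ Q) (hxy : x ≤ 1 - y) : x + y ∈ Q := by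
  simpa using hQ.add_add_mem hx hy hQ.zero_mem hxy (by simpa using (hQ.isProb hy).le_one)
    (by simpa using (hQ.isProb hx).le_one)

theorem add_le (hm : m ∈ Q) (hn : n ∈ Q) (hx : x ∈ Q) (hmn : m ≤ 1 - n) (hmx : m ≤ x)
    (hnx : n ≤ x) : m + n ≤ x := by
  have hsum := hQ.add_add_mem hm hn (hQ.one_sub_mem hx) hmn
    (by rwa [sub_sub_cancel]) (sub_le_sub_left hmx 1)
  simpa [sub_sub_cancel] using le_sub_iff_add_le.mpr (hQ.isProb hsum).le_one

theorem isInfIn_one (hx : x ∈ Q) : IsInfIn S Q x 1 x :=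
  ⟨hx, le_rfl, (hQ.isProb hx).le_one, fun _ _ h _ => h⟩

end IsAlg

theorem IsInfIn.exists_pos (hm : IsInfIn S Q x y m) (hu : u ∈ Q) (hux : u ≤ x) (huy : u ≤ y)
    (hu0 : 0 < u) : ∃ s, 0 < m s := by
  obtain ⟨-, s, hs⟩ := Pi.lt_def.mp hu0
  exact ⟨s, hs.trans_le (hm.2.2.2 u hu hux huy s)⟩

namespace IsBooleanAlg

variable (hQ : IsBooleanAlg S Q)
include hQ

theorem exists_isInfIn (hx : x ∈ Q) (hy : y ∈ Q) : ∃ m, IsInfIn S Q x y m :=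
  (hQ.2.1 x hx y hy).1

theorem exists_isSupIn (hx : x ∈ Q) (hy : y ∈ Q) : ∃ j, IsSupIn S Q x y j :=
  (hQ.2.1 x hx y hy).2

theorem eq_add_of_isInfIn (hx : x ∈ Q) (hy : y ∈ Q) (hm : IsInfIn S Q x y m)
    (hn : IsInfIn S Q x (1 - y) n) : x = m + n := by
  obtain ⟨j, hj⟩ := hQ.exists_isSupIn hm.1 hn.1
  have hmn : m ≤ 1 - n := hm.2.2.1.trans (le_sub_comm.mp hn.2.2.1)
  have hxj : x = j := hQ.2.2.1 x hx y hy (1 - y) (hQ.1.one_sub_mem hy) 1 x m n j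
    (hQ.2.2.2 y hy).2 (hQ.1.isInfIn_one hx) hm hn hj
  refine le_antisymm ?_ (hQ.1.add_le hm.1 hn.1 hx hmn hm.2.1 hn.2.1)
  rw [hxj]
  exact hj.2.2.2 _ (hQ.1.add_mem hm.1 hn.1 hmn)
    (le_add_of_nonneg_right (hQ.1.isProb hn.1).nonneg)
    (le_add_of_nonneg_left (hQ.1.isProb hm.1).nonneg)

theorem exists_pos_of_not_le (hx : x ∈ Q) (hy : y ∈ Q) (hxy : ¬x ≤ y)
    (hn : IsInfIn S Q x (1 - y) n) : ∃ s, 0 < n s := by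
  obtain ⟨m, hm⟩ := hQ.exists_isInfIn hx hy
  obtain ⟨s, hs⟩ : ∃ s, y s < x s := by simpa [Pi.le_def] using hxy
  have hxs := congrFun (hQ.eq_add_of_isInfIn hx hy hm hn) s
  have hms := hm.2.2.1 s
  simp only [Pi.add_apply] at hxs
  exact ⟨s, by linarith⟩

theorem exists_half_lt (hx : x ∈ Q) (hpos : ∃ s, 0 < x s) : ∃ s, 1 / 2 < x s := by
  by_contra! h
  obtain ⟨s, hs⟩ := hpos
  have hx0 : x ≤ 0 := (hQ.2.2.2 x hx).1.2.2.2 x hx le_rfl fun t => by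
    simp only [Pi.sub_apply, Pi.one_apply]
    linarith [h t]
  exact absurd (hx0 s) (not_le.mpr hs)

theorem exists_injective_fin_four {w : S → ℝ} (hx : x ∈ Q) (hy : y ∈ Q) (hxy : ¬x ≤ y)
    (hyx : ¬y ≤ x) (hm : IsInfIn S Q x y m) (hm0 : ∃ s, 0 < m s)
    (hw : IsInfIn S Q (1 - x) (1 - y) w) (hw0 : ∃ s, 0 < w s) :
    ∃ t : Fin 4 → S, Injective t := by
  have hx' := hQ.1.one_sub_mem hx
  have hy' := hQ.1.one_sub_mem hy
  obtain ⟨n, hn⟩ := hQ.exists_isInfIn hx hy'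
  obtain ⟨k, hk⟩ := hQ.exists_isInfIn hx' hy
  have hn0 := hQ.exists_pos_of_not_le hx hy hxy hn
  have hk0 := hQ.exists_pos_of_not_le hx' hy' (by rwa [sub_le_sub_iff_left])
    (by rwa [sub_sub_cancel])
  have hsum : m + n + (k + w) = 1 := by
    rw [← hQ.eq_add_of_isInfIn hx hy hm hn, ← hQ.eq_add_of_isInfIn hx' hy hk hw,
      add_sub_cancel]
  set f : Fin 4 → S → ℝ := ![m, n, k, w]
  have hmem : ∀ i, f i ∈ Q := by simp [f, Fin.forall_fin_succ, hm.1, hn.1, hk.1, hw.1]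
  have hpos : ∀ i, ∃ s, 0 < f i s := by simp [f, Fin.forall_fin_succ, hm0, hn0, hk0, hw0]
  choose t ht using fun i => hQ.exists_half_lt (hmem i) (hpos i)
  refine ⟨t, injective_of_sum_eq_one_of_half_lt (fun i => (hQ.1.isProb (hmem i)).nonneg) ?_ ht⟩
  simpa [f, Fin.sum_univ_four, add_assoc] using hsum

end IsBooleanAlg

end

theorem stmt_18_general {S : Type*} {P : Set (S → ℝ)} {p1 p2 : S → ℝ}
    (hMO : IsMO2 S P p1 p2) {q : S → ℝ}
    (h0q : (0 : S → ℝ) < q) (hq1 : q < p1) (hq2 : q < p2)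
    {Q : Set (S → ℝ)} (hQ : IsBooleanAlg S Q) (hsub : P ∪ {q} ⊆ Q)
    {v : S → ℝ} (hv : IsSupIn S Q p1 p2 v) (hv1 : v < (1 : S → ℝ)) :
    ∃ s1 s2 s3 s4 : S,
      s1 ≠ s2 ∧ s1 ≠ s3 ∧ s1 ≠ s4 ∧ s2 ≠ s3 ∧ s2 ≠ s4 ∧ s3 ≠ s4 := by
  obtain ⟨-, rfl, -, -, ⟨hp12, hp21⟩, -⟩ := hMO
  have hp1 : p1 ∈ Q := hsub (by simp)
  have hp2 : p2 ∈ Q := hsub (by simp)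
  obtain ⟨m, hm⟩ := hQ.exists_isInfIn hp1 hp2
  obtain ⟨w, hw⟩ := hQ.exists_isInfIn (hQ.1.one_sub_mem hp1) (hQ.1.one_sub_mem hp2)
  have hm0 := hm.exists_pos (hsub (by simp)) hq1.le hq2.le h0q
  have hw0 := hw.exists_pos (hQ.1.one_sub_mem hv.1) (sub_le_sub_left hv.2.1 1)
    (sub_le_sub_left hv.2.2.1 1) (sub_pos.mpr hv1)
  obtain ⟨t, ht⟩ := hQ.exists_injective_fin_four hp1 hp2 hp12 hp21 hm hm0 hw hw0
  exact ⟨t 0, t 1, t 2, t 3, ht.ne (by decide), ht.ne (by decide), ht.ne (by decide),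
    ht.ne (by decide), ht.ne (by decide), ht.ne (by decide)⟩

theorem stmt_18 {S : Type*} [Nonempty S] {P : Set (S → ℝ)} {p1 p2 : S → ℝ}
    (hMO : IsMO2 S P p1 p2) {q : S → ℝ} (hqn : q ∉ P)
    (h0q : (0 : S → ℝ) < q) (hq1 : q < p1) (hq2 : q < p2)
    {Q : Set (S → ℝ)} (hQ : IsBooleanAlg S Q) (hsub : P ∪ {q} ⊆ Q)
    {v : S → ℝ} (hv : IsSupIn S Q p1 p2 v) (hv1 : v < (1 : S → ℝ)) :
    ∃ s1 s2 s3 s4 : S,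
      s1 ≠ s2 ∧ s1 ≠ s3 ∧ s1 ≠ s4 ∧ s2 ≠ s3 ∧ s2 ≠ s4 ∧ s3 ≠ s4 :=
  stmt_18_general hMO h0q hq1 hq2 hQ hsub hv hv1
end

section
/- Let P = {0, p₁, 1 − p₁, p₂, 1 − p₂, 1} be an algebra of S-probabilities of type MO₂ and let q be a varying S-probability with q ∉ P such that p₁ − q, p₂ − q and 1 + q − p₁ − p₂ are varying S-probabilities (in particular they take values in [0,1]). Then P ∪ {q} can be embedded into a Boolean algebra: there exists a Boolean algebra Q of S-probabilities with P ∪ {q} ⊆ Q; i.e., q is critical. -/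
/-!
The four functions `q, p₁ - q, p₂ - q, 1 + q - p₁ - p₂` are nonnegative and sum to `1`, and each
exceeds `1/2` somewhere. At such a point every other member of the family is below `1/2`, so the
partial sums `∑ i ∈ A, aᵢ` are ordered exactly as the index sets `A` are ordered by inclusion.
Hence these sixteen partial sums form a copy of the power set of four atoms, i.e. a Boolean algebra,
and it contains `0, p₁, 1 - p₁, p₂, 1 - p₂, 1` and `q`.
-/

open Finset

lemma IsInfIn.unique {S : Type*} {P : Set (S → ℝ)} {p q m m' : S → ℝ}
    (hm : IsInfIn S P p q m) (hm' : IsInfIn S P p q m') : m = m' :=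
  le_antisymm (hm'.2.2.2 m hm.1 hm.2.1 hm.2.2.1) (hm.2.2.2 m' hm'.1 hm'.2.1 hm'.2.2.1)

lemma IsSupIn.unique {S : Type*} {P : Set (S → ℝ)} {p q j j' : S → ℝ}
    (hj : IsSupIn S P p q j) (hj' : IsSupIn S P p q j') : j = j' :=
  le_antisymm (hj.2.2.2 j' hj'.1 hj'.2.1 hj'.2.2.1) (hj'.2.2.2 j hj.1 hj.2.1 hj.2.2.1)

lemma IsProb.nonneg_s19 {S : Type*} {p : S → ℝ} (hp : IsProb S p) : 0 ≤ p :=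
  fun s => (hp s).1

lemma Varying.exists_half_lt {S : Type*} {p : S → ℝ} (hp : Varying S p) : ∃ s, 1 / 2 < p s := by
  simpa using hp.1

section PartitionOfUnity

variable {S ι : Type*} [Fintype ι] [DecidableEq ι] {a : ι → S → ℝ}

lemma one_sub_sum_eq_sum_compl (hsum : ∑ i, a i = 1) (A : Finset ι) :
    1 - ∑ i ∈ A, a i = ∑ i ∈ Aᶜ, a i := by
  rw [← hsum, ← sum_add_sum_compl A a, add_sub_cancel_left]

lemma sum_le_sum_iff_subset (hnn : ∀ i, 0 ≤ a i) (hsum : ∑ i, a i = 1)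
    (hhigh : ∀ i, ∃ s, 1 / 2 < a i s) (A B : Finset ι) :
    ∑ i ∈ A, a i ≤ ∑ i ∈ B, a i ↔ A ⊆ B := by
  refine ⟨fun hle i hiA => ?_, fun hAB => sum_le_sum_of_subset_of_nonneg hAB fun i _ _ => hnn i⟩
  by_contra hiB
  obtain ⟨s, hs⟩ := hhigh i
  have hA : a i s ≤ ∑ j ∈ A, a j s := single_le_sum (fun j _ => hnn j s) hiA
  have hB : ∑ j ∈ B, a j s ≤ ∑ j ∈ {i}ᶜ, a j s :=
    sum_le_sum_of_subset_of_nonneg (fun j hj => by simpa using ne_of_mem_of_not_mem hj hiB)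
      fun j _ _ => hnn j s
  have hcompl := congr_fun (one_sub_sum_eq_sum_compl hsum {i}) s
  have hle_s := hle s
  simp only [Finset.sum_apply, Pi.sub_apply, Pi.one_apply, sum_singleton] at hcompl hle_s
  linarith

variable (hnn : ∀ i, 0 ≤ a i) (hsum : ∑ i, a i = 1) (hhigh : ∀ i, ∃ s, 1 / 2 < a i s)
include hnn hsum hhigh

lemma isInfIn_range_sum_inter (A B : Finset ι) :
    IsInfIn S (Set.range fun C => ∑ i ∈ C, a i) (∑ i ∈ A, a i) (∑ i ∈ B, a i)
      (∑ i ∈ A ∩ B, a i) := by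
  simp only [IsInfIn, Set.forall_mem_range, Set.mem_range_self, true_and,
    sum_le_sum_iff_subset hnn hsum hhigh]
  exact ⟨inter_subset_left, inter_subset_right, fun _ => subset_inter⟩

lemma isSupIn_range_sum_union (A B : Finset ι) :
    IsSupIn S (Set.range fun C => ∑ i ∈ C, a i) (∑ i ∈ A, a i) (∑ i ∈ B, a i)
      (∑ i ∈ A ∪ B, a i) := by
  simp only [IsSupIn, Set.forall_mem_range, Set.mem_range_self, true_and,
    sum_le_sum_iff_subset hnn hsum hhigh]
  exact ⟨subset_union_left, subset_union_right, fun _ => union_subset⟩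

lemma disjoint_of_sum_le_one_sub_sum {A B : Finset ι}
    (h : ∑ i ∈ A, a i ≤ 1 - ∑ i ∈ B, a i) : Disjoint A B := by
  rw [one_sub_sum_eq_sum_compl hsum, sum_le_sum_iff_subset hnn hsum hhigh] at h
  exact disjoint_left.mpr fun _ hiA hiB => mem_compl.mp (h hiA) hiB

lemma isAlg_range_sum : IsAlg S (Set.range fun C => ∑ i ∈ C, a i) := by
  refine ⟨?_, ⟨∅, sum_empty⟩, ?_, ?_⟩
  · rintro _ ⟨A, rfl⟩ s
    refine ⟨sum_nonneg (fun i _ => hnn i) s, ?_⟩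
    have hle := (sum_le_sum_iff_subset hnn hsum hhigh A univ).mpr (subset_univ A) s
    rwa [hsum] at hle
  · rintro _ ⟨A, rfl⟩
    exact ⟨Aᶜ, (one_sub_sum_eq_sum_compl hsum A).symm⟩
  · rintro _ _ _ ⟨A, rfl⟩ ⟨B, rfl⟩ ⟨C, rfl⟩ hAB hBC hCA
    have dAB := disjoint_of_sum_le_one_sub_sum hnn hsum hhigh hAB
    have dBC := disjoint_of_sum_le_one_sub_sum hnn hsum hhigh hBC
    have dCA := disjoint_of_sum_le_one_sub_sum hnn hsum hhigh hCA
    refine ⟨A ∪ B ∪ C, ?_⟩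
    dsimp only
    rw [sum_union (disjoint_union_left.mpr ⟨dCA.symm, dBC⟩), sum_union dAB]

theorem isBooleanAlg_range_sum : IsBooleanAlg S (Set.range fun C => ∑ i ∈ C, a i) := by
  have hInf := isInfIn_range_sum_inter hnn hsum hhigh
  have hSup := isSupIn_range_sum_union hnn hsum hhigh
  refine ⟨isAlg_range_sum hnn hsum hhigh, ?_, ?_, ?_⟩
  · rintro _ ⟨A, rfl⟩ _ ⟨B, rfl⟩
    exact ⟨⟨_, hInf A B⟩, ⟨_, hSup A B⟩⟩
  · rintro _ ⟨A, rfl⟩ _ ⟨B, rfl⟩ _ ⟨C, rfl⟩ qr x pq pr y hqr hx hpq hpr hy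
    obtain rfl := hqr.unique (hSup B C)
    obtain rfl := hpq.unique (hInf A B)
    obtain rfl := hpr.unique (hInf A C)
    rw [hx.unique (hInf A (B ∪ C)), hy.unique (hSup (A ∩ B) (A ∩ C)), inter_union_distrib_left]
  · rintro _ ⟨A, rfl⟩
    rw [one_sub_sum_eq_sum_compl hsum]
    have hbot := hInf A Aᶜ
    have htop := hSup A Aᶜ
    rw [inter_compl, sum_empty] at hbot
    rw [union_compl, hsum] at htop
    exact ⟨hbot, htop⟩

end PartitionOfUnity

theorem stmt_19_general {S : Type*} {P : Set (S → ℝ)} {p1 p2 : S → ℝ}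
    (hMO : IsMO2 S P p1 p2) {q : S → ℝ}
    (hq : IsProb S q) (hqv : Varying S q)
    (h1p : IsProb S (p1 - q)) (h1v : Varying S (p1 - q))
    (h2p : IsProb S (p2 - q)) (h2v : Varying S (p2 - q))
    (h3p : IsProb S (1 + q - p1 - p2)) (h3v : Varying S (1 + q - p1 - p2)) :
    ∃ Q : Set (S → ℝ), IsBooleanAlg S Q ∧ P ∪ {q} ⊆ Q := by
  set a : Fin 4 → S → ℝ := ![q, p1 - q, p2 - q, 1 + q - p1 - p2]
  have hnn : ∀ i, 0 ≤ a i := by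
    simp only [Fin.forall_fin_succ, IsEmpty.forall_iff, and_true]
    exact ⟨hq.nonneg_s19, h1p.nonneg_s19, h2p.nonneg_s19, h3p.nonneg_s19⟩
  have hsum : ∑ i, a i = 1 := by
    simp only [a, Fin.sum_univ_four, Matrix.cons_val]
    abel
  have hhigh : ∀ i, ∃ s, 1 / 2 < a i s := by
    simp only [Fin.forall_fin_succ, IsEmpty.forall_iff, and_true]
    exact ⟨hqv.exists_half_lt, h1v.exists_half_lt, h2v.exists_half_lt, h3v.exists_half_lt⟩
  refine ⟨_, isBooleanAlg_range_sum hnn hsum hhigh, ?_⟩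
  rw [hMO.2.1, Set.union_singleton]
  simp only [Set.insert_subset_iff, Set.singleton_subset_iff, Set.mem_range]
  refine ⟨⟨{0}, ?_⟩, ⟨∅, ?_⟩, ⟨{0, 1}, ?_⟩, ⟨{2, 3}, ?_⟩, ⟨{0, 2}, ?_⟩, ⟨{1, 3}, ?_⟩,
    ⟨univ, hsum⟩⟩ <;> simp [a] <;> abel

theorem stmt_19 {S : Type*} [Nonempty S] {P : Set (S → ℝ)} {p1 p2 : S → ℝ}
    (hMO : IsMO2 S P p1 p2) {q : S → ℝ} (hqn : q ∉ P)
    (hq : IsProb S q) (hqv : Varying S q)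
    (h1p : IsProb S (p1 - q)) (h1v : Varying S (p1 - q))
    (h2p : IsProb S (p2 - q)) (h2v : Varying S (p2 - q))
    (h3p : IsProb S (1 + q - p1 - p2)) (h3v : Varying S (1 + q - p1 - p2)) :
    ∃ Q : Set (S → ℝ), IsBooleanAlg S Q ∧ P ∪ {q} ⊆ Q :=
  stmt_19_general hMO hq hqv h1p h1v h2p h2v h3p h3v
end
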